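/- Every overlap is a potential overlap: if u, y, v ∈ ℝ^d and i, j ≤ m are such that (u + A_i − y) ∩ (v + A_j) ≠ ∅, then |u − y − v| ≤ R. -/

import Mathlib

/-!
Applying `Q^k` to a point of `A_j` and unfolding the set equation `k` times writes it as a
digit of `(Dᵏ)_{lj}` plus a point of some `A_l`; hence any two points of `⋃ A_i` differ by
`Q^{-k}` of (a difference of two such digits, of norm at most `e`) plus (a difference of two
points of `⋃ A_i`). With `q = ‖Q^{-k}‖ < 1` the diameter `δ` of the compact set `⋃ A_i`
therefore satisfies `δ ≤ q e + q δ`, i.e. `δ ≤ R`. An overlap of `u + A_i - y` and `v + A_j`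
exhibits `u - y - v` as such a difference.
-/

open Pointwise Set

noncomputable section

/-- Iterated digit sets: `iterD Q D n i j` is `(Dⁿ)_{ij}`. -/
def iterD {E : Type*} [AddCommGroup E] {m : ℕ}
    (Q : E → E) (D : Fin m → Fin m → Set E) : ℕ → Fin m → Fin m → Set E
  | 0 => fun i j => if i = j then {0} else ∅
  | n + 1 => fun i j => ⋃ l : Fin m, D i l + Q '' iterD Q D n l j

theorem le_div_one_sub_of_le_add_mul {α : Type*} {s : Set α} {f : α → ℝ} {a q : ℝ}
    (hq0 : 0 ≤ q) (hq1 : q < 1) (hbdd : BddAbove (f '' s))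
    (h : ∀ x ∈ s, ∃ y ∈ s, f x ≤ a + q * f y) {x : α} (hx : x ∈ s) :
    f x ≤ a / (1 - q) := by
  set M := sSup (f '' s)
  have hfM : ∀ y ∈ s, f y ≤ M := fun y hy => le_csSup hbdd (mem_image_of_mem f hy)
  have hM : M ≤ a + q * M := by
    refine csSup_le ⟨f x, mem_image_of_mem f hx⟩ (forall_mem_image.2 fun x hx => ?_)
    obtain ⟨y, hy, hxy⟩ := h x hx
    exact hxy.trans (by gcongr; exact hfM y hy)
  rw [le_div_iff₀ (sub_pos.2 hq1)]
  nlinarith [hfM x hx]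

theorem norm_sub_le_sSup_norm_sub {E ι κ : Type*} [SeminormedAddCommGroup E] [Finite ι]
    [Finite κ] {T : ι → κ → Set E} (hT : ∀ i j, (T i j).Finite) {i i' : ι} {j j' : κ}
    {x y : E} (hx : x ∈ T i j) (hy : y ∈ T i' j') :
    ‖x - y‖ ≤ sSup {t : ℝ | ∃ i j i' j', ∃ x ∈ T i j, ∃ y ∈ T i' j', t = ‖x - y‖} := by
  have hfin : {t : ℝ | ∃ i j i' j', ∃ x ∈ T i j, ∃ y ∈ T i' j', t = ‖x - y‖}.Finite := by
    have : {t : ℝ | ∃ i j i' j', ∃ x ∈ T i j, ∃ y ∈ T i' j', t = ‖x - y‖} =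
        ⋃ i, ⋃ j, ⋃ i', ⋃ j', image2 (fun x y => ‖x - y‖) (T i j) (T i' j') := by
      ext t
      simp [eq_comm]
    rw [this]
    exact finite_iUnion fun i => finite_iUnion fun j => finite_iUnion fun i' =>
      finite_iUnion fun j' => (hT i j).image2 _ (hT i' j')
  exact le_csSup hfin.bddAbove ⟨i, j, i', j', x, hx, y, hy, rfl⟩

section iterD

variable {E : Type*} [AddCommGroup E] {m : ℕ} {D : Fin m → Fin m → Set E}

theorem iterD_finite (Q : E → E) (hD : ∀ i j, (D i j).Finite) (n : ℕ) (i j : Fin m) :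
    (iterD Q D n i j).Finite := by
  induction n generalizing i with
  | zero =>
    simp only [iterD]
    split <;> simp
  | succ n ih => exact finite_iUnion fun l => (hD i l).add ((ih l).image Q)

theorem exists_iterate_eq_add_of_mem {F : Type*} [FunLike F E E] [AddMonoidHomClass F E E]
    (Q : F) {A : Fin m → Set E} (htile : ∀ j, Q '' A j = ⋃ i, D i j + A i) (n : ℕ)
    {j : Fin m} {z : E} (hz : z ∈ A j) :
    ∃ l, ∃ c ∈ iterD Q D n l j, ∃ a ∈ A l, Q^[n] z = c + a := by
  induction n with
  | zero => exact ⟨j, 0, by simp [iterD], z, hz, by simp⟩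
  | succ n ih =>
    obtain ⟨l, c, hc, a, ha, hza⟩ := ih
    obtain ⟨_, ⟨i, rfl⟩, d, hd, a', ha', hda'⟩ : Q a ∈ ⋃ i, D i l + A i :=
      htile l ▸ mem_image_of_mem Q ha
    refine ⟨i, d + Q c, mem_iUnion.2 ⟨l, add_mem_add hd (mem_image_of_mem Q hc)⟩, a', ha', ?_⟩
    rw [Function.iterate_succ_apply', hza, map_add, ← hda']
    beta_reduce
    abel

end iterD

section tiling

variable {𝕜 E : Type*} [NontriviallyNormedField 𝕜] [NormedAddCommGroup E] [NormedSpace 𝕜 E]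

theorem ContinuousLinearEquiv.symm_pow_apply_iterate (Q : E ≃L[𝕜] E) (n : ℕ) (x : E) :
    ((Q.symm : E →L[𝕜] E) ^ n) (Q^[n] x) = x := by
  rw [FunLike.coe_pow_eq_iterate]
  exact Function.LeftInverse.iterate (fun y => Q.symm_apply_apply y) n x

theorem norm_sub_le_of_tiling {m k : ℕ} (Q : E ≃L[𝕜] E)
    (hQk : ‖(Q.symm : E →L[𝕜] E) ^ k‖ < 1) (D : Fin m → Fin m → Set E) {e : ℝ}
    (he : ∀ i j i' j', ∀ x ∈ iterD Q D k i j, ∀ y ∈ iterD Q D k i' j', ‖x - y‖ ≤ e)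
    (A : Fin m → Set E) (hAcp : ∀ i, IsCompact (A i)) (htile : ∀ j, Q '' A j = ⋃ i, D i j + A i)
    {j j' : Fin m} {z z' : E} (hz : z ∈ A j) (hz' : z' ∈ A j') :
    ‖z - z'‖ ≤ e * ‖(Q.symm : E →L[𝕜] E) ^ k‖ / (1 - ‖(Q.symm : E →L[𝕜] E) ^ k‖) := by
  set P := (Q.symm : E →L[𝕜] E) ^ k
  set K := ⋃ i, A i
  have hK : IsCompact (K ×ˢ K) := (isCompact_iUnion hAcp).prod (isCompact_iUnion hAcp)
  have hbdd : BddAbove ((fun p : E × E => ‖p.1 - p.2‖) '' (K ×ˢ K)) :=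
    (hK.image (by fun_prop)).bddAbove
  have hcontract : ∀ p ∈ K ×ˢ K, ∃ p' ∈ K ×ˢ K,
      ‖p.1 - p.2‖ ≤ ‖P‖ * e + ‖P‖ * ‖p'.1 - p'.2‖ := by
    rintro ⟨z, z'⟩ ⟨hz, hz'⟩
    obtain ⟨-, ⟨j, rfl⟩, hz⟩ := hz
    obtain ⟨-, ⟨j', rfl⟩, hz'⟩ := hz'
    obtain ⟨l, c, hc, a, ha, hza⟩ := exists_iterate_eq_add_of_mem Q htile k hz
    obtain ⟨l', c', hc', a', ha', hza'⟩ := exists_iterate_eq_add_of_mem Q htile k hz'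
    have hsplit : z - z' = P (c - c') + P (a - a') := by
      rw [← map_add, ← Q.symm_pow_apply_iterate k z, ← Q.symm_pow_apply_iterate k z', hza, hza',
        ← map_sub]
      congr 1
      abel
    refine ⟨(a, a'), ⟨mem_iUnion.2 ⟨l, ha⟩, mem_iUnion.2 ⟨l', ha'⟩⟩, ?_⟩
    calc ‖z - z'‖ ≤ ‖P (c - c')‖ + ‖P (a - a')‖ := hsplit ▸ norm_add_le _ _
      _ ≤ ‖P‖ * ‖c - c'‖ + ‖P‖ * ‖a - a'‖ := add_le_add (P.le_opNorm _) (P.le_opNorm _)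
      _ ≤ ‖P‖ * e + ‖P‖ * ‖a - a'‖ := by gcongr; exact he l j l' j' c hc c' hc'
  have := le_div_one_sub_of_le_add_mul (norm_nonneg P) hQk hbdd hcontract (x := (z, z'))
    ⟨mem_iUnion.2 ⟨j, hz⟩, mem_iUnion.2 ⟨j', hz'⟩⟩
  rwa [mul_comm] at this

end tiling

theorem stmt_4_general (d m k : ℕ)
    (Q : EuclideanSpace ℝ (Fin d) ≃L[ℝ] EuclideanSpace ℝ (Fin d))
    (hQk : ‖(Q.symm : EuclideanSpace ℝ (Fin d) →L[ℝ] EuclideanSpace ℝ (Fin d)) ^ k‖ < 1)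
    (D : Fin m → Fin m → Set (EuclideanSpace ℝ (Fin d)))
    (hDfin : ∀ i j, (D i j).Finite)
    (e : ℝ)
    (he : e = sSup {t : ℝ | ∃ i j i' j' : Fin m,
      ∃ x ∈ iterD (⇑Q) D k i j, ∃ y ∈ iterD (⇑Q) D k i' j', t = ‖x - y‖})
    (R : ℝ)
    (hR : R = e * ‖(Q.symm : EuclideanSpace ℝ (Fin d) →L[ℝ] EuclideanSpace ℝ (Fin d)) ^ k‖ /
      (1 - ‖(Q.symm : EuclideanSpace ℝ (Fin d) →L[ℝ] EuclideanSpace ℝ (Fin d)) ^ k‖))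
    (A : Fin m → Set (EuclideanSpace ℝ (Fin d)))
    (hAcp : ∀ i, IsCompact (A i))
    (htile : ∀ j, ⇑Q '' A j = ⋃ i, D i j + A i) :
    ∀ (u y v : EuclideanSpace ℝ (Fin d)) (i j : Fin m),
      (((u - y) +ᵥ A i) ∩ (v +ᵥ A j)).Nonempty → ‖u - y - v‖ ≤ R := by
  rintro u y v i j ⟨p, ⟨a, ha, hpa⟩, ⟨b, hb, hpb⟩⟩
  have hdiff : u - y - v = b - a := by
    have hab : (u - y) + a = v + b := hpa.trans hpb.symm
    linear_combination (norm := module) hab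
  have hdigits : ∀ i j i' j', ∀ x ∈ iterD Q D k i j, ∀ y ∈ iterD Q D k i' j', ‖x - y‖ ≤ e :=
    fun _ _ _ _ _ hx _ hy => he ▸ norm_sub_le_sSup_norm_sub (iterD_finite Q hDfin k) hx hy
  rw [hdiff, hR]
  exact norm_sub_le_of_tiling Q hQk D hdigits A hAcp htile hb ha

/-- every overlap is a potential overlap: if
`(u + A_i − y) ∩ (v + A_j) ≠ ∅` then `|u − y − v| ≤ R`. -/
theorem stmt_4 (d m k : ℕ) (hd : 1 ≤ d) (hm : 1 ≤ m) (hk : 1 ≤ k)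
    (Q : EuclideanSpace ℝ (Fin d) ≃L[ℝ] EuclideanSpace ℝ (Fin d))
    (hQk : ‖(Q.symm : EuclideanSpace ℝ (Fin d) →L[ℝ] EuclideanSpace ℝ (Fin d)) ^ k‖ < 1)
    (D : Fin m → Fin m → Set (EuclideanSpace ℝ (Fin d)))
    (hDfin : ∀ i j, (D i j).Finite)
    (e : ℝ)
    (he : e = sSup {t : ℝ | ∃ i j i' j' : Fin m,
      ∃ x ∈ iterD (⇑Q) D k i j, ∃ y ∈ iterD (⇑Q) D k i' j', t = ‖x - y‖})
    (R : ℝ)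
    (hR : R = e * ‖(Q.symm : EuclideanSpace ℝ (Fin d) →L[ℝ] EuclideanSpace ℝ (Fin d)) ^ k‖ /
      (1 - ‖(Q.symm : EuclideanSpace ℝ (Fin d) →L[ℝ] EuclideanSpace ℝ (Fin d)) ^ k‖))
    (A : Fin m → Set (EuclideanSpace ℝ (Fin d)))
    (hAne : ∀ i, (A i).Nonempty) (hAcp : ∀ i, IsCompact (A i))
    (htile : ∀ j, ⇑Q '' A j = ⋃ i, D i j + A i) :
    ∀ (u y v : EuclideanSpace ℝ (Fin d)) (i j : Fin m),
      (((u - y) +ᵥ A i) ∩ (v +ᵥ A j)).Nonempty → ‖u - y - v‖ ≤ R :=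
  stmt_4_general d m k Q hQk D hDfin e he R hR A hAcp htile
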